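/- For every integer n ≥ 2 and every real p ≥ 1 + 4/n, the function F(r) = (n−1)·(r²/sinh²r)·((p−1)(n−1)cosh²r + 2) + 2(n−1)(p−4)·(r·cosh r/sinh r) + (p − 5) is nonnegative for all r > 0; moreover F is nondecreasing in p for fixed r, so it suffices to prove the case p = 1 + 4/n, which is equivalent to (2n−2)r²cosh²r + n·r² − (3n−4)·r·cosh r·sinh r − 2·sinh²r ≥ 0. -/

import Mathlib

/-!
`F` is affine in `q` with slope `((n - 1) r coth r + 1)²`, so it suffices to take `q = 1 + 4/n`,
where `F` is `2(n - 1)/(n sinh² r)` times `G = (n - 2) A + 2 B` with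
`A = 2r²cosh²r + r² - 3r cosh r sinh r` and `B = r²cosh²r + r² - r cosh r sinh r - sinh²r`.
In terms of `x = 2r`, `A = (r/2)(x cosh x + 2x - 3 sinh x)` and
`8B = x² cosh x + 3x² - 2x sinh x - 4 cosh x + 4`; both brackets vanish at `0`, and
differentiating them until the derivative is visibly nonnegative shows they are nonnegative.
-/
open Real Set

theorem nonneg_of_hasDerivAt_nonneg {f f' : ℝ → ℝ} (hf : ∀ t, HasDerivAt f (f' t) t)
    (h0 : 0 ≤ f 0) (hf' : ∀ t, 0 ≤ t → 0 ≤ f' t) {x : ℝ} (hx : 0 ≤ x) : 0 ≤ f x := by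
  have hmono : MonotoneOn f (Ici 0) :=
    monotoneOn_of_hasDerivWithinAt_nonneg (convex_Ici 0)
      (fun t _ => (hf t).continuousAt.continuousWithinAt)
      (fun t _ => (hf t).hasDerivWithinAt)
      (fun t ht => hf' t (interior_subset ht))
  exact h0.trans (hmono self_mem_Ici hx hx)

namespace Real

variable {x : ℝ}

theorem mul_cosh_sub_sinh_nonneg (hx : 0 ≤ x) : 0 ≤ x * cosh x - sinh x :=
  nonneg_of_hasDerivAt_nonneg
    (fun t => (((hasDerivAt_id' t).mul (hasDerivAt_cosh t)).sub (hasDerivAt_sinh t)).congr_deriv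
      (by ring))
    (by simp) (fun t ht => mul_nonneg ht (sinh_nonneg_iff.2 ht)) hx

theorem mul_sinh_add_two_sub_two_mul_cosh_nonneg (hx : 0 ≤ x) :
    0 ≤ x * sinh x + 2 - 2 * cosh x :=
  nonneg_of_hasDerivAt_nonneg
    (fun t => ((((hasDerivAt_id' t).mul (hasDerivAt_sinh t)).add_const 2).sub
      ((hasDerivAt_cosh t).const_mul 2)).congr_deriv (by ring))
    (by simp) (fun _ ht => mul_cosh_sub_sinh_nonneg ht) hx

theorem mul_cosh_add_two_mul_sub_three_mul_sinh_nonneg (hx : 0 ≤ x) :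
    0 ≤ x * cosh x + 2 * x - 3 * sinh x :=
  nonneg_of_hasDerivAt_nonneg
    (fun t => ((((hasDerivAt_id' t).mul (hasDerivAt_cosh t)).add
      ((hasDerivAt_id' t).const_mul 2)).sub ((hasDerivAt_sinh t).const_mul 3)).congr_deriv
      (by ring))
    (by simp) (fun _ ht => mul_sinh_add_two_sub_two_mul_cosh_nonneg ht) hx

theorem sq_mul_sinh_add_four_mul_mul_cosh_sub_four_mul_sinh_nonneg (hx : 0 ≤ x) :
    0 ≤ x ^ 2 * sinh x + 4 * x * cosh x - 4 * sinh x :=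
  nonneg_of_hasDerivAt_nonneg (f' := fun t => t ^ 2 * cosh t + 6 * t * sinh t)
    (fun t => ((((hasDerivAt_pow 2 t).mul (hasDerivAt_sinh t)).add
      (((hasDerivAt_id' t).const_mul 4).mul (hasDerivAt_cosh t))).sub
      ((hasDerivAt_sinh t).const_mul 4)).congr_deriv (by push_cast; ring))
    (by simp) (fun t ht => by have := sinh_nonneg_iff.2 ht; positivity) hx

theorem two_mul_mul_sinh_add_sq_mul_cosh_add_six_sub_six_mul_cosh_nonneg (hx : 0 ≤ x) :
    0 ≤ 2 * x * sinh x + x ^ 2 * cosh x + 6 - 6 * cosh x :=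
  nonneg_of_hasDerivAt_nonneg
    (fun t => ((((((hasDerivAt_id' t).const_mul 2).mul (hasDerivAt_sinh t)).add
      ((hasDerivAt_pow 2 t).mul (hasDerivAt_cosh t))).add_const 6).sub
      ((hasDerivAt_cosh t).const_mul 6)).congr_deriv (by push_cast; ring))
    (by simp) (fun _ ht => sq_mul_sinh_add_four_mul_mul_cosh_sub_four_mul_sinh_nonneg ht) hx

theorem sq_mul_sinh_add_six_mul_sub_six_mul_sinh_nonneg (hx : 0 ≤ x) :
    0 ≤ x ^ 2 * sinh x + 6 * x - 6 * sinh x :=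
  nonneg_of_hasDerivAt_nonneg
    (fun t => ((((hasDerivAt_pow 2 t).mul (hasDerivAt_sinh t)).add
      ((hasDerivAt_id' t).const_mul 6)).sub ((hasDerivAt_sinh t).const_mul 6)).congr_deriv
      (by push_cast; ring))
    (by simp) (fun _ ht => two_mul_mul_sinh_add_sq_mul_cosh_add_six_sub_six_mul_cosh_nonneg ht) hx

theorem sq_mul_cosh_add_three_mul_sq_sub_two_mul_mul_sinh_sub_four_mul_cosh_add_four_nonneg
    (hx : 0 ≤ x) : 0 ≤ x ^ 2 * cosh x + 3 * x ^ 2 - 2 * x * sinh x - 4 * cosh x + 4 :=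
  nonneg_of_hasDerivAt_nonneg
    (fun t => ((((((hasDerivAt_pow 2 t).mul (hasDerivAt_cosh t)).add
      ((hasDerivAt_pow 2 t).const_mul 3)).sub
      (((hasDerivAt_id' t).const_mul 2).mul (hasDerivAt_sinh t))).sub
      ((hasDerivAt_cosh t).const_mul 4)).add_const 4).congr_deriv (by push_cast; ring))
    (by simp) (fun _ ht => sq_mul_sinh_add_six_mul_sub_six_mul_sinh_nonneg ht) hx

variable {r : ℝ}

theorem three_mul_mul_cosh_mul_sinh_le (hr : 0 ≤ r) :
    3 * r * cosh r * sinh r ≤ 2 * r ^ 2 * cosh r ^ 2 + r ^ 2 := by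
  have h := mul_cosh_add_two_mul_sub_three_mul_sinh_nonneg (mul_nonneg zero_le_two hr)
  rw [cosh_two_mul, sinh_two_mul] at h
  linear_combination (r / 2) * h - r ^ 2 * cosh_sq r

theorem mul_cosh_mul_sinh_add_sinh_sq_le (hr : 0 ≤ r) :
    r * cosh r * sinh r + sinh r ^ 2 ≤ r ^ 2 * cosh r ^ 2 + r ^ 2 := by
  have h := sq_mul_cosh_add_three_mul_sq_sub_two_mul_mul_sinh_sub_four_mul_cosh_add_four_nonneg
    (mul_nonneg zero_le_two hr)
  rw [cosh_two_mul, sinh_two_mul] at h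
  linear_combination h / 8 - (1 + r ^ 2) / 2 * cosh_sq r

end Real

noncomputable def F (n q r : ℝ) : ℝ :=
  (n - 1) * (r ^ 2 / sinh r ^ 2) * ((q - 1) * (n - 1) * cosh r ^ 2 + 2)
    + 2 * (n - 1) * (q - 4) * (r * cosh r / sinh r) + (q - 5)

noncomputable def G (n r : ℝ) : ℝ :=
  (2 * n - 2) * r ^ 2 * cosh r ^ 2 + n * r ^ 2 - (3 * n - 4) * r * cosh r * sinh r - 2 * sinh r ^ 2

theorem F_sub_F (n q₁ q₂ r : ℝ) :
    F n q₂ r - F n q₁ r = (q₂ - q₁) * ((n - 1) * (r * cosh r / sinh r) + 1) ^ 2 := by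
  unfold F
  ring

theorem monotone_F (n r : ℝ) : Monotone fun q => F n q r := fun q₁ q₂ hq =>
  sub_nonneg.1 <| (F_sub_F n q₁ q₂ r).symm ▸ mul_nonneg (sub_nonneg.2 hq) (sq_nonneg _)

theorem F_threshold_eq {n : ℝ} (hn : n ≠ 0) (hr : sinh r ≠ 0) :
    F n (1 + 4 / n) r = 2 * (n - 1) / (n * sinh r ^ 2) * G n r := by
  simp only [F, G]
  field_simp
  ring

theorem G_eq (n r : ℝ) :
    G n r = (n - 2) * (2 * r ^ 2 * cosh r ^ 2 + r ^ 2 - 3 * r * cosh r * sinh r)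
      + 2 * (r ^ 2 * cosh r ^ 2 + r ^ 2 - r * cosh r * sinh r - sinh r ^ 2) := by
  simp only [G]
  ring

theorem G_nonneg {n : ℝ} (hn : 2 ≤ n) (hr : 0 ≤ r) : 0 ≤ G n r := by
  rw [G_eq]
  have hA := sub_nonneg.2 (three_mul_mul_cosh_mul_sinh_le hr)
  have hB := sub_nonneg.2 (mul_cosh_mul_sinh_add_sinh_sq_le hr)
  have := mul_nonneg (sub_nonneg.2 hn) hA
  linarith

theorem F_threshold_nonneg_iff {n : ℝ} (hn : 1 < n) (hr : 0 < r) :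
    0 ≤ F n (1 + 4 / n) r ↔ 0 ≤ G n r := by
  have hs := sinh_pos_iff.2 hr
  rw [F_threshold_eq (by positivity) hs.ne']
  have : 0 < 2 * (n - 1) / (n * sinh r ^ 2) := by
    have := sub_pos.2 hn
    positivity
  exact mul_nonneg_iff_of_pos_left this

theorem stmt_17 (n : ℕ) (hn : 2 ≤ n) (p : ℝ) (hp : 1 + 4 / (n : ℝ) ≤ p) :
    let F : ℝ → ℝ → ℝ := fun q r =>
      ((n : ℝ) - 1) * (r ^ 2 / (Real.sinh r) ^ 2) * ((q - 1) * ((n : ℝ) - 1) * (Real.cosh r) ^ 2 + 2)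
        + 2 * ((n : ℝ) - 1) * (q - 4) * (r * Real.cosh r / Real.sinh r) + (q - 5)
    (∀ r : ℝ, 0 < r → 0 ≤ F p r) ∧
    (∀ r : ℝ, 0 < r → ∀ q₁ q₂ : ℝ, q₁ ≤ q₂ → F q₁ r ≤ F q₂ r) ∧
    (∀ r : ℝ, 0 < r →
      (0 ≤ F (1 + 4 / (n : ℝ)) r ↔
        0 ≤ (2 * (n : ℝ) - 2) * r ^ 2 * (Real.cosh r) ^ 2 + (n : ℝ) * r ^ 2
              - (3 * (n : ℝ) - 4) * r * Real.cosh r * Real.sinh r - 2 * (Real.sinh r) ^ 2)) := by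
  have hn' : (2 : ℝ) ≤ n := by exact_mod_cast hn
  refine ⟨fun r hr => ?_, fun r _ _ _ hq => monotone_F n r hq,
    fun r hr => F_threshold_nonneg_iff (by linarith) hr⟩
  have h := (F_threshold_nonneg_iff (by linarith) hr).2 (G_nonneg hn' hr.le)
  exact h.trans (monotone_F n r hp)
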